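/- Let h ∈ K̄[x] be a monic polynomial over an algebraically closed valued field, let α ∈ K̄ and β ∈ K̄^×, and set h_{α,β}(x') := h(βx' + α). Let m (resp. n) be the lowest (resp. highest) degree appearing among the terms of a normalized reduction of h_{α,β}. Then m equals the number of roots z of h (counted with multiplicity) satisfying v(z − α) > v(β), and n equals the number of roots z of h (counted with multiplicity) satisfying v(z − α) ≥ v(β). -/

import Mathlib

/-!
Over an algebraically closed field, `h(βx' + α) = ∏_z (βx' + (α - z))` with `z` running over the
roots of `h`. Once `v` is extended by `v 0 = ⊤` it is a genuine valuation, and the least and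
greatest indices at which a coefficient attains the Gauss valuation are additive under
multiplication: at the index `m₁ + m₂` (resp. `n₁ + n₂`) the product of the two extremal terms
has valuation `v(g₁) + v(g₂)`, while every other contribution has strictly larger valuation.
For a linear factor `βx' + c` these indices are `0` or `1` according to how `v(c)` compares
with `v(β)`, which produces the two root counts.
-/

open Polynomial
open scoped Classical

/-- An additive ℚ-valued valuation on a field `K`, recorded as a bare function with
the valuation axioms imposed only at nonzero elements (the value at `0` is junk). -/
structure AddVal (K : Type*) [Field K] where
  v : K → ℚ
  map_one : v 1 = 0
  map_mul : ∀ x y : K, x ≠ 0 → y ≠ 0 → v (x * y) = v x + v y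
  add_ge : ∀ x y : K, x ≠ 0 → y ≠ 0 → x + y ≠ 0 → min (v x) (v y) ≤ v (x + y)

variable {K : Type*} [Field K]

/-- The Gauss valuation of a polynomial: the minimum of the valuations of its
(nonzero) coefficients, with junk value `0` at the zero polynomial. -/
noncomputable def AddVal.gauss (w : AddVal K) (h : K[X]) : ℚ :=
  if hh : h = 0 then 0
  else h.support.inf' (Polynomial.support_nonempty.mpr hh) fun i => w.v (h.coeff i)

/-- Gauss valuation valued in `ℚ ∪ {∞}`, taking the value `⊤` at the zero polynomial. -/
noncomputable def AddVal.gaussT (w : AddVal K) (h : K[X]) : WithTop ℚ :=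
  if h = 0 then ⊤ else (w.gauss h : WithTop ℚ)

/-- The quantity `t = v(ρ) - v(h) ∈ ℚ ∪ {∞}` attached to a
part-`p`-th-power decomposition `h = q^p + ρ` (it is `⊤` when `ρ = 0`). -/
noncomputable def AddVal.tdiff (w : AddVal K) (h ρ : K[X]) : WithTop ℚ :=
  if ρ = 0 then ⊤ else ((w.gauss ρ - w.gauss h : ℚ) : WithTop ℚ)

/-- `h = q ^ p + ρ` is a part-`p`-th-power decomposition (`deg q ≤ ⌊deg h / p⌋`). -/
def IsPartDecomp (p : ℕ) (h q ρ : K[X]) : Prop :=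
  h = q ^ p + ρ ∧ q.natDegree ≤ h.natDegree / p

/-- The threshold `p·v(p)/(p-1)`. -/
noncomputable def pBound (w : AddVal K) (p : ℕ) : ℚ :=
  (p : ℚ) * w.v (p : K) / ((p : ℚ) - 1)

/-- A part-`p`-th-power decomposition is good if `t ≥ p·v(p)/(p-1)` or if no
decomposition achieves a strictly larger value of `t = v(ρ) - v(h)`. -/
def IsGoodDecomp (w : AddVal K) (p : ℕ) (h q ρ : K[X]) : Prop :=
  IsPartDecomp p h q ρ ∧
    (((pBound w p : ℚ) : WithTop ℚ) ≤ w.tdiff h ρ ∨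
      ∀ q₁ ρ₁ : K[X], IsPartDecomp p h q₁ ρ₁ → w.tdiff h ρ₁ ≤ w.tdiff h ρ)

namespace AddVal

variable (w : AddVal K)

noncomputable def toAddValuation : AddValuation K (WithTop ℚ) :=
  AddValuation.of (fun x => if x = 0 then ⊤ else (w.v x : WithTop ℚ))
    (by simp) (by simp [w.map_one])
    (fun x y => by
      by_cases hx : x = 0
      · simp [hx]
      by_cases hy : y = 0
      · simp [hy]
      by_cases hxy : x + y = 0
      · simp [hxy]
      simp only [hx, hy, hxy, if_false]
      exact_mod_cast w.add_ge x y hx hy hxy)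
    (fun x y => by
      by_cases hx : x = 0
      · simp [hx]
      by_cases hy : y = 0
      · simp [hy]
      simp [hx, hy, w.map_mul x y hx hy])

lemma toAddValuation_of_ne_zero {x : K} (hx : x ≠ 0) : w.toAddValuation x = w.v x :=
  if_neg hx

lemma gaussT_of_ne_zero {g : K[X]} (hg : g ≠ 0) : w.gaussT g = w.gauss g :=
  if_neg hg

lemma gaussT_ne_top {g : K[X]} (hg : g ≠ 0) : w.gaussT g ≠ ⊤ := by
  simp [w.gaussT_of_ne_zero hg]

lemma gaussT_le (g : K[X]) (i : ℕ) : w.gaussT g ≤ w.toAddValuation (g.coeff i) := by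
  by_cases hi : g.coeff i = 0
  · simp [hi]
  have hg : g ≠ 0 := fun h => hi (by simp [h])
  rw [w.gaussT_of_ne_zero hg, w.toAddValuation_of_ne_zero hi, gauss, dif_neg hg,
    WithTop.coe_le_coe]
  exact Finset.inf'_le _ (mem_support_iff.mpr hi)

lemma exists_toAddValuation_coeff_eq_gaussT {g : K[X]} (hg : g ≠ 0) :
    ∃ i, w.toAddValuation (g.coeff i) = w.gaussT g := by
  obtain ⟨i, hi, hmin⟩ := Finset.exists_mem_eq_inf' (support_nonempty.mpr hg)
    fun i => w.v (g.coeff i)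
  refine ⟨i, ?_⟩
  rw [w.gaussT_of_ne_zero hg, gauss, dif_neg hg, hmin,
    w.toAddValuation_of_ne_zero (mem_support_iff.mp hi)]

lemma gaussT_eq_of_le_of_eq {g : K[X]} {t : WithTop ℚ}
    (hle : ∀ i, t ≤ w.toAddValuation (g.coeff i)) {i₀ : ℕ}
    (heq : w.toAddValuation (g.coeff i₀) = t) : w.gaussT g = t := by
  by_cases hg : g = 0
  · simp_all [gaussT]
  obtain ⟨i, hi⟩ := w.exists_toAddValuation_coeff_eq_gaussT hg
  exact le_antisymm (heq ▸ w.gaussT_le g i₀) (hi ▸ hle i)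

/-- The degrees of the monomials of a normalized reduction of `g`. -/
def dominantIndices (g : K[X]) : Set ℕ :=
  {i | g.coeff i ≠ 0 ∧ w.v (g.coeff i) = w.gauss g}

variable {w}

lemma ne_zero_of_mem_dominantIndices {g : K[X]} {i : ℕ} (hi : i ∈ w.dominantIndices g) :
    g ≠ 0 := fun hg => hi.1 (by simp [hg])

lemma mem_dominantIndices_iff {g : K[X]} (hg : g ≠ 0) {i : ℕ} :
    i ∈ w.dominantIndices g ↔ w.toAddValuation (g.coeff i) = w.gaussT g := by
  rw [w.gaussT_of_ne_zero hg]
  by_cases hi : g.coeff i = 0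
  · simp [dominantIndices, hi]
  simp [dominantIndices, hi, w.toAddValuation_of_ne_zero hi]

lemma dominantIndices_nonempty {g : K[X]} (hg : g ≠ 0) : (w.dominantIndices g).Nonempty :=
  (w.exists_toAddValuation_coeff_eq_gaussT hg).imp fun _ => (mem_dominantIndices_iff hg).mpr

lemma gaussT_lt_of_notMem_dominantIndices {g : K[X]} (hg : g ≠ 0) {i : ℕ}
    (hi : i ∉ w.dominantIndices g) : w.gaussT g < w.toAddValuation (g.coeff i) :=
  (w.gaussT_le g i).lt_of_ne fun h => hi ((mem_dominantIndices_iff hg).mpr h.symm)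

lemma dominantIndices_one : w.dominantIndices 1 = {0} := by
  ext i
  rw [mem_dominantIndices_iff one_ne_zero,
    w.gaussT_eq_of_le_of_eq (t := 0) (i₀ := 0) (fun i => ?_) (by simp)]
  · rcases i with _ | i <;> simp [coeff_one]
  · rcases i with _ | i <;> simp [coeff_one]

section Mul

open Finset.HasAntidiagonal

variable {g₁ g₂ : K[X]}

lemma add_gaussT_le_coeff_mul (k : ℕ) :
    w.gaussT g₁ + w.gaussT g₂ ≤ w.toAddValuation ((g₁ * g₂).coeff k) := by
  rw [coeff_mul]
  refine AddValuation.map_le_sum _ fun x _ => ?_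
  rw [AddValuation.map_mul]
  exact add_le_add (w.gaussT_le g₁ x.1) (w.gaussT_le g₂ x.2)

lemma add_gaussT_lt_sum_coeff_mul (hg₁ : g₁ ≠ 0) (hg₂ : g₂ ≠ 0) {s : Finset (ℕ × ℕ)}
    (hs : ∀ x ∈ s, x.1 ∉ w.dominantIndices g₁ ∨ x.2 ∉ w.dominantIndices g₂) :
    w.gaussT g₁ + w.gaussT g₂ < w.toAddValuation (∑ x ∈ s, g₁.coeff x.1 * g₂.coeff x.2) := by
  refine AddValuation.map_lt_sum _
    (WithTop.add_ne_top.mpr ⟨w.gaussT_ne_top hg₁, w.gaussT_ne_top hg₂⟩) fun x hx => ?_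
  rw [AddValuation.map_mul]
  rcases hs x hx with h | h
  · exact WithTop.add_lt_add_of_lt_of_le (w.gaussT_ne_top hg₂)
      (gaussT_lt_of_notMem_dominantIndices hg₁ h) (w.gaussT_le g₂ x.2)
  · exact WithTop.add_lt_add_of_le_of_lt (w.gaussT_ne_top hg₁)
      (w.gaussT_le g₁ x.1) (gaussT_lt_of_notMem_dominantIndices hg₂ h)

lemma coeff_mul_eq_add_gaussT {a b k : ℕ} (hab : (a, b) ∈ antidiagonal k)
    (ha : a ∈ w.dominantIndices g₁) (hb : b ∈ w.dominantIndices g₂)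
    (hothers : ∀ x ∈ antidiagonal k, x ≠ (a, b) →
      x.1 ∉ w.dominantIndices g₁ ∨ x.2 ∉ w.dominantIndices g₂) :
    w.toAddValuation ((g₁ * g₂).coeff k) = w.gaussT g₁ + w.gaussT g₂ := by
  have hg₁ := ne_zero_of_mem_dominantIndices ha
  have hg₂ := ne_zero_of_mem_dominantIndices hb
  have hcorner : w.toAddValuation (g₁.coeff a * g₂.coeff b) = w.gaussT g₁ + w.gaussT g₂ := by
    rw [AddValuation.map_mul, (mem_dominantIndices_iff hg₁).mp ha,
      (mem_dominantIndices_iff hg₂).mp hb]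
  have hrest := add_gaussT_lt_sum_coeff_mul hg₁ hg₂ fun x hx =>
    hothers x (Finset.mem_of_mem_erase hx) (Finset.ne_of_mem_erase hx)
  rw [← hcorner] at hrest
  rw [coeff_mul, ← Finset.add_sum_erase _ _ hab, AddValuation.map_add_eq_of_lt_left _ hrest,
    hcorner]

variable {m₁ m₂ : ℕ}

lemma notMem_or_notMem_of_isLeast (h₁ : IsLeast (w.dominantIndices g₁) m₁)
    (h₂ : IsLeast (w.dominantIndices g₂) m₂) {k : ℕ} (hk : k ≤ m₁ + m₂) {x : ℕ × ℕ}
    (hx : x ∈ antidiagonal k) (hne : x ≠ (m₁, m₂)) :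
    x.1 ∉ w.dominantIndices g₁ ∨ x.2 ∉ w.dominantIndices g₂ := by
  rw [mem_antidiagonal] at hx
  by_contra! hmem
  have := h₁.2 hmem.1
  have := h₂.2 hmem.2
  exact hne (Prod.ext (by omega) (by omega))

lemma notMem_or_notMem_of_isGreatest (h₁ : IsGreatest (w.dominantIndices g₁) m₁)
    (h₂ : IsGreatest (w.dominantIndices g₂) m₂) {k : ℕ} (hk : m₁ + m₂ ≤ k) {x : ℕ × ℕ}
    (hx : x ∈ antidiagonal k) (hne : x ≠ (m₁, m₂)) :
    x.1 ∉ w.dominantIndices g₁ ∨ x.2 ∉ w.dominantIndices g₂ := by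
  rw [mem_antidiagonal] at hx
  by_contra! hmem
  have := h₁.2 hmem.1
  have := h₂.2 hmem.2
  exact hne (Prod.ext (by omega) (by omega))

theorem gaussT_mul (g₁ g₂ : K[X]) : w.gaussT (g₁ * g₂) = w.gaussT g₁ + w.gaussT g₂ := by
  rcases eq_or_ne g₁ 0 with rfl | hg₁
  · simp [gaussT]
  rcases eq_or_ne g₂ 0 with rfl | hg₂
  · simp [gaussT]
  have hleast {g : K[X]} (hg : g ≠ 0) :
      IsLeast (w.dominantIndices g) (sInf (w.dominantIndices g)) :=
    ⟨Nat.sInf_mem (dominantIndices_nonempty hg), fun _ => Nat.sInf_le⟩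
  exact w.gaussT_eq_of_le_of_eq add_gaussT_le_coeff_mul <|
    coeff_mul_eq_add_gaussT (mem_antidiagonal.mpr rfl) (hleast hg₁).1 (hleast hg₂).1
      fun _ => notMem_or_notMem_of_isLeast (hleast hg₁) (hleast hg₂) le_rfl

lemma mem_dominantIndices_mul {a b k : ℕ} (hab : (a, b) ∈ antidiagonal k)
    (ha : a ∈ w.dominantIndices g₁) (hb : b ∈ w.dominantIndices g₂)
    (hothers : ∀ x ∈ antidiagonal k, x ≠ (a, b) →
      x.1 ∉ w.dominantIndices g₁ ∨ x.2 ∉ w.dominantIndices g₂) :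
    k ∈ w.dominantIndices (g₁ * g₂) := by
  rw [mem_dominantIndices_iff (mul_ne_zero (ne_zero_of_mem_dominantIndices ha)
    (ne_zero_of_mem_dominantIndices hb)), gaussT_mul]
  exact coeff_mul_eq_add_gaussT hab ha hb hothers

lemma notMem_dominantIndices_mul (hg₁ : g₁ ≠ 0) (hg₂ : g₂ ≠ 0) {k : ℕ}
    (hk : ∀ x ∈ antidiagonal k, x.1 ∉ w.dominantIndices g₁ ∨ x.2 ∉ w.dominantIndices g₂) :
    k ∉ w.dominantIndices (g₁ * g₂) := by
  intro hmem
  have hlt := add_gaussT_lt_sum_coeff_mul hg₁ hg₂ hk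
  rw [← coeff_mul, ← gaussT_mul, ← (mem_dominantIndices_iff (mul_ne_zero hg₁ hg₂)).mp hmem]
    at hlt
  exact hlt.false

theorem isLeast_dominantIndices_mul (h₁ : IsLeast (w.dominantIndices g₁) m₁)
    (h₂ : IsLeast (w.dominantIndices g₂) m₂) :
    IsLeast (w.dominantIndices (g₁ * g₂)) (m₁ + m₂) := by
  refine ⟨mem_dominantIndices_mul (mem_antidiagonal.mpr rfl) h₁.1 h₂.1
    fun _ => notMem_or_notMem_of_isLeast h₁ h₂ le_rfl, fun k hk => not_lt.mp fun hlt => ?_⟩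
  refine notMem_dominantIndices_mul (ne_zero_of_mem_dominantIndices h₁.1)
    (ne_zero_of_mem_dominantIndices h₂.1) (fun x hx => ?_) hk
  refine notMem_or_notMem_of_isLeast h₁ h₂ hlt.le hx fun h => ?_
  rw [h, mem_antidiagonal] at hx
  omega

theorem isGreatest_dominantIndices_mul (h₁ : IsGreatest (w.dominantIndices g₁) m₁)
    (h₂ : IsGreatest (w.dominantIndices g₂) m₂) :
    IsGreatest (w.dominantIndices (g₁ * g₂)) (m₁ + m₂) := by
  refine ⟨mem_dominantIndices_mul (mem_antidiagonal.mpr rfl) h₁.1 h₂.1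
    fun _ => notMem_or_notMem_of_isGreatest h₁ h₂ le_rfl, fun k hk => not_lt.mp fun hlt => ?_⟩
  refine notMem_dominantIndices_mul (ne_zero_of_mem_dominantIndices h₁.1)
    (ne_zero_of_mem_dominantIndices h₂.1) (fun x hx => ?_) hk
  refine notMem_or_notMem_of_isGreatest h₁ h₂ hlt.le hx fun h => ?_
  rw [h, mem_antidiagonal] at hx
  omega

end Mul

section Linear

variable {β : K}

lemma gaussT_linear (c : K) :
    w.gaussT (C β * X + C c) = min (w.toAddValuation c) (w.toAddValuation β) := by
  have hle (i : ℕ) : min (w.toAddValuation c) (w.toAddValuation β) ≤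
      w.toAddValuation ((C β * X + C c).coeff i) := by
    rcases i with _ | _ | i <;> simp [coeff_X, coeff_C]
  rcases le_total (w.toAddValuation c) (w.toAddValuation β) with h | h
  · exact w.gaussT_eq_of_le_of_eq hle (i₀ := 0) (by simp [h])
  · exact w.gaussT_eq_of_le_of_eq hle (i₀ := 1) (by simp [h])

lemma dominantIndices_linear (hβ : β ≠ 0) (c : K) :
    w.dominantIndices (C β * X + C c) =
      {i | i = 0 ∧ w.toAddValuation c ≤ w.toAddValuation β ∨
        i = 1 ∧ w.toAddValuation β ≤ w.toAddValuation c} := by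
  have hne : C β * X + C c ≠ 0 := fun h => hβ (by simpa using congrArg (coeff · 1) h)
  ext i
  rw [mem_dominantIndices_iff hne, gaussT_linear]
  rcases i with _ | _ | i <;> simp [coeff_X, coeff_C, eq_comm (a := (⊤ : WithTop ℚ)), hβ]

lemma isLeast_dominantIndices_linear (hβ : β ≠ 0) (c : K) :
    IsLeast (w.dominantIndices (C β * X + C c))
      (if w.toAddValuation β < w.toAddValuation c then 1 else 0) := by
  rw [dominantIndices_linear hβ]
  split_ifs with h
  · refine ⟨Or.inr ⟨rfl, h.le⟩, ?_⟩
    rintro i (⟨rfl, hi⟩ | ⟨rfl, -⟩)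
    · exact absurd hi (not_le.mpr h)
    · exact le_rfl
  · exact ⟨Or.inl ⟨rfl, not_lt.mp h⟩, fun i _ => Nat.zero_le i⟩

lemma isGreatest_dominantIndices_linear (hβ : β ≠ 0) (c : K) :
    IsGreatest (w.dominantIndices (C β * X + C c))
      (if w.toAddValuation β ≤ w.toAddValuation c then 1 else 0) := by
  rw [dominantIndices_linear hβ]
  split_ifs with h
  · refine ⟨Or.inr ⟨rfl, h⟩, ?_⟩
    rintro i (⟨rfl, -⟩ | ⟨rfl, -⟩) <;> simp
  · refine ⟨Or.inl ⟨rfl, (not_le.mp h).le⟩, ?_⟩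
    rintro i (⟨rfl, -⟩ | ⟨rfl, hi⟩)
    · exact le_rfl
    · exact absurd hi h

theorem isLeast_dominantIndices_prod_linear (hβ : β ≠ 0) (s : Multiset K) :
    IsLeast (w.dominantIndices (s.map fun c => C β * X + C c).prod)
      (s.countP fun c => w.toAddValuation β < w.toAddValuation c) := by
  induction s using Multiset.induction_on with
  | empty => simp [dominantIndices_one, isLeast_singleton]
  | cons c s ih =>
    rw [Multiset.map_cons, Multiset.prod_cons, Multiset.countP_cons, Nat.add_comm]
    exact isLeast_dominantIndices_mul (isLeast_dominantIndices_linear hβ c) ih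

theorem isGreatest_dominantIndices_prod_linear (hβ : β ≠ 0) (s : Multiset K) :
    IsGreatest (w.dominantIndices (s.map fun c => C β * X + C c).prod)
      (s.countP fun c => w.toAddValuation β ≤ w.toAddValuation c) := by
  induction s using Multiset.induction_on with
  | empty => simp [dominantIndices_one, isGreatest_singleton]
  | cons c s ih =>
    rw [Multiset.map_cons, Multiset.prod_cons, Multiset.countP_cons, Nat.add_comm]
    exact isGreatest_dominantIndices_mul (isGreatest_dominantIndices_linear hβ c) ih

end Linear

lemma toAddValuation_lt_sub_iff {β : K} (hβ : β ≠ 0) (α z : K) :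
    w.toAddValuation β < w.toAddValuation (α - z) ↔ z = α ∨ w.v β < w.v (z - α) := by
  rcases eq_or_ne z α with rfl | hz
  · simp [w.toAddValuation_of_ne_zero hβ]
  rw [AddValuation.map_sub_swap, w.toAddValuation_of_ne_zero hβ,
    w.toAddValuation_of_ne_zero (sub_ne_zero.mpr hz)]
  simp [hz]

lemma toAddValuation_le_sub_iff {β : K} (hβ : β ≠ 0) (α z : K) :
    w.toAddValuation β ≤ w.toAddValuation (α - z) ↔ z = α ∨ w.v β ≤ w.v (z - α) := by
  rcases eq_or_ne z α with rfl | hz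
  · simp
  rw [AddValuation.map_sub_swap, w.toAddValuation_of_ne_zero hβ,
    w.toAddValuation_of_ne_zero (sub_ne_zero.mpr hz)]
  simp [hz]

end AddVal

lemma Polynomial.Monic.comp_linear_eq_prod_roots {h : K[X]} (hmon : h.Monic) (hsplit : h.Splits)
    (α β : K) :
    h.comp (C β * X + C α) = ((h.roots.map fun z => α - z).map fun c => C β * X + C c).prod := by
  conv_lhs => rw [hsplit.eq_prod_roots_of_monic hmon]
  rw [multiset_prod_comp, Multiset.map_map, Multiset.map_map]
  congr 1
  refine Multiset.map_congr rfl fun z _ => ?_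
  simp only [Function.comp_apply, sub_comp, X_comp, C_comp, C_sub]
  ring

/-- Lemma 4.12: for a monic polynomial `h` over an algebraically closed
valued field, the lowest (resp. highest) degree appearing in a normalized reduction of
`h_{α,β}(x') = h(βx' + α)` — i.e. the least (resp. greatest) index whose coefficient
attains the Gauss valuation — equals the number of roots `z` of `h`, counted with
multiplicity, with `v(z - α) > v(β)` (resp. `v(z - α) ≥ v(β)`); here a root `z = α`
satisfies both conditions (its "valuation" being `+∞`). -/
theorem statement7 {K : Type*} [Field K] [IsAlgClosed K] (w : AddVal K)
    (h : K[X]) (hmon : h.Monic) (α β : K) (hβ : β ≠ 0) :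
    sInf {i : ℕ | (h.comp (C β * X + C α)).coeff i ≠ 0 ∧
        w.v ((h.comp (C β * X + C α)).coeff i) = w.gauss (h.comp (C β * X + C α))}
      = Multiset.card (h.roots.filter fun z => z = α ∨ w.v β < w.v (z - α)) ∧
    sSup {i : ℕ | (h.comp (C β * X + C α)).coeff i ≠ 0 ∧
        w.v ((h.comp (C β * X + C α)).coeff i) = w.gauss (h.comp (C β * X + C α))}
      = Multiset.card (h.roots.filter fun z => z = α ∨ w.v β ≤ w.v (z - α)) := by
  change sInf (w.dominantIndices _) = _ ∧ sSup (w.dominantIndices _) = _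
  rw [hmon.comp_linear_eq_prod_roots (IsAlgClosed.splits h)]
  constructor
  · rw [(AddVal.isLeast_dominantIndices_prod_linear hβ _).csInf_eq, Multiset.countP_map]
    exact congrArg _ (Multiset.filter_congr fun z _ => AddVal.toAddValuation_lt_sub_iff hβ α z)
  · rw [(AddVal.isGreatest_dominantIndices_prod_linear hβ _).csSup_eq, Multiset.countP_map]
    exact congrArg _ (Multiset.filter_congr fun z _ => AddVal.toAddValuation_le_sub_iff hβ α z)
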